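/- arXiv:1306.6265 — 4 statements merged into one kernel-verified Lean document; each statement's English description precedes it below -/
import Mathlib

section
/- Let H be an r × n matrix over F_q whose rows are linearly independent (rank r), and let S be a subset of the column indices {1,…,n} such that no nonzero vector in the row space of H has its support contained in S. Then for every syndrome m ∈ F_q^r and every assignment z : S → F_q of values on the coordinates in S, the number of vectors x ∈ F_q^n satisfying H·x = m and x_i = z_i for all i ∈ S equals q^{n − r − |S|}. (Perfect secrecy of linear coset coding against an eavesdropper seeing fewer than d(C^⊥) chosen coordinates.) -/
/-!
The map `x ↦ (H x, x|_S)` is multiplication by the matrix whose rows are the rows of `H`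
followed by the unit vectors `e_i`, `i ∈ S`. The span of the `e_i` consists of vectors supported
in `S`, so the hypothesis on `S` says that it meets the row space of `H` only in `0`; hence these
`r + |S|` rows are independent, the map is onto `F^r × F^S`, and each of its fibres is a coset of
its kernel, of dimension `n - r - |S|`.
-/

def supp {n : ℕ} {F : Type} [Field F] [DecidableEq F] (c : Fin n → F) : Finset (Fin n) :=
  Finset.univ.filter (fun i => c i ≠ 0)

open Module Matrix Function

theorem LinearMap.natCard_fiber_eq_of_surjective {K V W : Type*} [Field K] [AddCommGroup V]
    [Module K V] [FiniteDimensional K V] [AddCommGroup W] [Module K W] {f : V →ₗ[K] W}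
    (hf : Surjective f) (w : W) :
    Nat.card {x // f x = w} = Nat.card K ^ (finrank K V - finrank K W) := by
  have hker : finrank K (LinearMap.ker f) = finrank K V - finrank K W := by
    have := f.finrank_range_add_finrank_ker
    rw [LinearMap.range_eq_top.mpr hf, finrank_top] at this
    omega
  rw [← hker, ← Module.natCard_eq_pow_finrank]
  exact Nat.card_congr (AddMonoidHom.fiberEquivKerOfSurjective (f := f.toAddMonoidHom) hf w)

theorem Matrix.mulVecLin_surjective_of_linearIndependent_row {K m n : Type*} [Field K]
    [Fintype m] [Fintype n] {M : Matrix m n K} (hM : LinearIndependent K M.row) :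
    Surjective M.mulVecLin := by
  rw [← LinearMap.range_eq_top]
  apply Submodule.eq_top_of_finrank_eq
  rw [← Matrix.rank, hM.rank_matrix, finrank_fintype_fun_eq_card]

section CoordRows

variable {F : Type} [Field F] {n : ℕ}

def coordRows (S : Finset (Fin n)) : Matrix S (Fin n) F :=
  Matrix.of fun i => Pi.single (i : Fin n) 1

theorem coordRows_mulVec (S : Finset (Fin n)) (x : Fin n → F) :
    coordRows S *ᵥ x = fun i : S => x i := by
  ext i
  simp [coordRows, mulVec, single_dotProduct]

theorem linearIndependent_coordRows_row (S : Finset (Fin n)) :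
    LinearIndependent F (coordRows (F := F) S).row := by
  convert (Pi.basisFun F (Fin n)).linearIndependent.comp _ Subtype.val_injective
  ext i
  simp [coordRows, Matrix.row]

theorem supp_subset_of_mem_span_coordRows_row [DecidableEq F] {S : Finset (Fin n)}
    {c : Fin n → F} (hc : c ∈ Submodule.span F (Set.range (coordRows (F := F) S).row)) :
    supp c ⊆ S := by
  suffices h : ∀ j ∉ S, c j = 0 by
    intro j hj
    by_contra hjS
    exact (Finset.mem_filter.mp hj).2 (h j hjS)
  intro j hjS
  induction hc using Submodule.span_induction with
  | mem _ h =>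
    obtain ⟨i, rfl⟩ := h
    exact Pi.single_eq_of_ne (M := fun _ => F) (fun hji : j = i => hjS (hji ▸ i.2)) 1
  | zero => rfl
  | add a b _ _ ha hb => simp [ha, hb]
  | smul t a _ ha => simp [ha]

theorem linearIndependent_fromRows_coordRows_row [DecidableEq F] {ι : Type*}
    {H : Matrix ι (Fin n) F} (hH : LinearIndependent F H.row) {S : Finset (Fin n)}
    (hS : ∀ c ∈ Submodule.span F (Set.range H.row), supp c ⊆ S → c = 0) :
    LinearIndependent F (fromRows H (coordRows S)).row :=
  hH.sum_type (linearIndependent_coordRows_row S) <| Submodule.disjoint_def.mpr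
    fun c hcH hcS => hS c hcH (supp_subset_of_mem_span_coordRows_row hcS)

theorem fromRows_coordRows_mulVec_eq_iff {ι : Type*} (H : Matrix ι (Fin n) F)
    (S : Finset (Fin n)) (x : Fin n → F) (m : ι → F) (z : Fin n → F) :
    fromRows H (coordRows S) *ᵥ x = Sum.elim m (fun i : S => z i) ↔
      H *ᵥ x = m ∧ ∀ i ∈ S, x i = z i := by
  simp [fromRows_mulVec, coordRows_mulVec, funext_iff]

end CoordRows

/-- Perfect secrecy of linear coset coding: if no nonzero vector of the row space of the
parity-check matrix `H` has support inside `S`, then for each syndrome `m` and each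
assignment `z` of values on the coordinates in `S`, the number of encodings `x` with
`H · x = m` agreeing with `z` on `S` is exactly `q ^ (n - r - |S|)`, independently of `m`. -/
theorem coset_coding_perfect_secrecy {n r : ℕ} {F : Type} [Field F] [Fintype F] [DecidableEq F]
    (H : Matrix (Fin r) (Fin n) F) (hH : LinearIndependent F (fun i => H i))
    (S : Finset (Fin n))
    (hS : ∀ c ∈ Submodule.span F (Set.range fun i => H i), supp c ⊆ S → c = 0)
    (m : Fin r → F) (z : Fin n → F) :
    Nat.card {x : Fin n → F // H.mulVec x = m ∧ ∀ i ∈ S, x i = z i} =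
      Fintype.card F ^ (n - r - S.card) := by
  have hsurj := mulVecLin_surjective_of_linearIndependent_row
    (linearIndependent_fromRows_coordRows_row hH hS)
  rw [← Nat.card_congr (Equiv.subtypeEquivRight
      (fromRows_coordRows_mulVec_eq_iff H S · m z)),
    ← Nat.card_eq_fintype_card]
  simpa [Nat.sub_sub] using LinearMap.natCard_fiber_eq_of_surjective hsurj _
end

section
/- Every intersecting binary linear code is minimal: if C is a linear code of length n over F_2 such that for all nonzero codewords c, c' ∈ C, supp(c) ∩ supp(c') ≠ ∅, then every nonzero codeword of C is minimal, i.e., for nonzero c, c' ∈ C, supp(c') ⊆ supp(c) implies c' = c. -/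
theorem mem_supp {n : ℕ} {F : Type} [Field F] [DecidableEq F] {c : Fin n → F} {i : Fin n} :
    i ∈ supp c ↔ c i ≠ 0 := by
  simp [supp]

theorem ZMod.two_sub_eq_zero_of_ne_zero {x y : ZMod 2} (hx : x ≠ 0) (hy : y ≠ 0) : x - y = 0 := by
  revert x y; decide

theorem disjoint_supp_sub_of_supp_subset {n : ℕ} {c c' : Fin n → ZMod 2}
    (h : supp c' ⊆ supp c) : Disjoint (supp (c - c')) (supp c') := by
  refine Finset.disjoint_left.mpr fun i hi hi' => mem_supp.mp hi ?_
  exact ZMod.two_sub_eq_zero_of_ne_zero (mem_supp.mp (h hi')) (mem_supp.mp hi')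

/-- Every intersecting binary linear code is minimal: if the supports of any two nonzero
codewords of `C ⊆ F_2^n` intersect, then for nonzero codewords `c, c' ∈ C`,
`supp c' ⊆ supp c` implies `c' = c`. -/
theorem intersecting_binary_code_is_minimal {n : ℕ}
    (C : Submodule (ZMod 2) (Fin n → ZMod 2))
    (hint : ∀ c ∈ C, c ≠ 0 → ∀ c' ∈ C, c' ≠ 0 → (supp c ∩ supp c').Nonempty) :
    ∀ c ∈ C, c ≠ 0 → ∀ c' ∈ C, c' ≠ 0 → supp c' ⊆ supp c → c' = c := by
  intro c hc _ c' hc' hc'0 hsub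
  by_contra hne
  have hmeet := hint (c - c') (C.sub_mem hc hc') (sub_ne_zero.mpr (Ne.symm hne)) c' hc' hc'0
  exact Finset.not_disjoint_iff_nonempty_inter.mpr hmeet (disjoint_supp_sub_of_supp_subset hsub)
end

section
/- (Maximal bound, counting form) If C is a minimal linear code of length n and dimension k over F_q, then q^k ≤ 1 + (q − 1) · binom(n, ⌊n/2⌋), where binom denotes the binomial coefficient. -/
open Finset

section MinimalCode

variable {n : ℕ} {F : Type} [Field F] [DecidableEq F]

def IsMinimalCode (C : Submodule F (Fin n → F)) : Prop :=
  ∀ c ∈ C, c ≠ 0 → ∀ c' ∈ C, supp c' ⊆ supp c → ∃ lam : F, c' = lam • c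

lemma supp_smul_of_ne_zero {lam : F} (h : lam ≠ 0) (c : Fin n → F) :
    supp (lam • c) = supp c := by
  ext i
  simp [supp, h]

namespace IsMinimalCode

variable {C : Submodule F (Fin n → F)}

lemma exists_ne_zero_smul_of_supp_subset (hC : IsMinimalCode C) {c c' : Fin n → F}
    (hc : c ∈ C) (hc0 : c ≠ 0) (hc' : c' ∈ C) (hc'0 : c' ≠ 0) (h : supp c' ⊆ supp c) :
    ∃ lam ≠ (0 : F), c' = lam • c := by
  obtain ⟨lam, rfl⟩ := hC c hc hc0 c' hc' h
  exact ⟨lam, by rintro rfl; simp at hc'0, rfl⟩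

lemma isAntichain_image_supp (hC : IsMinimalCode C) {S : Set (Fin n → F)}
    (hS : ∀ c ∈ S, c ∈ C ∧ c ≠ 0) : IsAntichain (· ⊆ ·) (supp '' S) := by
  rintro _ ⟨c, hcS, rfl⟩ _ ⟨c', hc'S, rfl⟩ hne hsub
  obtain ⟨hc, hc0⟩ := hS c hcS
  obtain ⟨hc', hc'0⟩ := hS c' hc'S
  obtain ⟨lam, hlam, rfl⟩ := hC.exists_ne_zero_smul_of_supp_subset hc' hc'0 hc hc0 hsub
  exact hne (supp_smul_of_ne_zero hlam c')

variable [Fintype F]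

lemma card_filter_supp_eq_le (hC : IsMinimalCode C) {S : Finset (Fin n → F)}
    (hS : ∀ c ∈ S, c ∈ C ∧ c ≠ 0) {c : Fin n → F} (hc : c ∈ S) :
    #{c' ∈ S | supp c' = supp c} ≤ Fintype.card F - 1 :=
  calc #{c' ∈ S | supp c' = supp c}
      ≤ #((univ.erase (0 : F)).image (· • c)) := by
        refine card_le_card fun c' hc' => ?_
        obtain ⟨hc'S, hsupp⟩ := mem_filter.mp hc'
        obtain ⟨lam, hlam, rfl⟩ := hC.exists_ne_zero_smul_of_supp_subset
          (hS c hc).1 (hS c hc).2 (hS c' hc'S).1 (hS c' hc'S).2 hsupp.le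
        exact mem_image.mpr ⟨lam, mem_erase.mpr ⟨hlam, mem_univ _⟩, rfl⟩
    _ ≤ #(univ.erase (0 : F)) := card_image_le
    _ = Fintype.card F - 1 := by rw [card_erase_of_mem (mem_univ _), card_univ]

lemma card_le [Fintype C] (hC : IsMinimalCode C) :
    Fintype.card C ≤ 1 + (Fintype.card F - 1) * n.choose (n / 2) := by
  classical
  set S : Finset (Fin n → F) := (univ.filter (· ∈ C)).erase 0
  have hS : ∀ c ∈ S, c ∈ C ∧ c ≠ 0 := fun c hc =>
    ⟨(mem_filter.mp (mem_of_mem_erase hc)).2, ne_of_mem_erase hc⟩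
  have hcard : Fintype.card C = #S + 1 := by
    rw [card_erase_add_one (by simp [C.zero_mem]), Fintype.card_subtype]
  have hsperner : #(S.image supp) ≤ n.choose (n / 2) := by
    simpa using IsAntichain.sperner (𝒜 := S.image supp)
      (by simpa using hC.isAntichain_image_supp hS)
  have hfibers : #S ≤ (Fintype.card F - 1) * #(S.image supp) :=
    card_le_mul_card_image S _ fun s hs => by
      obtain ⟨c, hc, rfl⟩ := mem_image.mp hs
      exact hC.card_filter_supp_eq_le hS hc
  calc Fintype.card C = #S + 1 := hcard
    _ ≤ (Fintype.card F - 1) * #(S.image supp) + 1 := by gcongr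
    _ ≤ (Fintype.card F - 1) * n.choose (n / 2) + 1 := by gcongr
    _ = _ := add_comm _ _

end IsMinimalCode

end MinimalCode

/-- Maximal bound (counting form): a minimal linear code of length `n` and dimension `k`
over `F_q` satisfies `q^k ≤ 1 + (q - 1) * binom(n, ⌊n/2⌋)`. -/
theorem minimal_code_sperner_bound {n k : ℕ} {F : Type} [Field F] [Fintype F] [DecidableEq F]
    (C : Submodule F (Fin n → F)) (hk : Module.finrank F C = k)
    (hmin : ∀ c ∈ C, c ≠ 0 → ∀ c' ∈ C, supp c' ⊆ supp c → ∃ lam : F, c' = lam • c) :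
    Fintype.card F ^ k ≤ 1 + (Fintype.card F - 1) * Nat.choose n (n / 2) := by
  classical
  rw [← hk, ← Module.card_eq_pow_finrank (V := C)]
  exact IsMinimalCode.card_le hmin
end

section
/- The number of ordered pairs (a, b) of vectors in F_q^n such that a and b are linearly independent and supp(b) ⊆ supp(a) equals (q² − q + 1)^n − q^{n+1} + q − 1; in particular, this number is at most (q² − q + 1)^n. -/
theorem Nat.card_subtype_and_add_card_subtype_not_and {α : Type*} [Finite α] (P Q : α → Prop) :
    Nat.card {x // Q x ∧ P x} + Nat.card {x // ¬ Q x ∧ P x} = Nat.card {x // P x} := by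
  classical
  rw [← Nat.card_sum]
  refine Nat.card_congr (.trans ?_ (Equiv.sumCompl fun x : {x // P x} => Q x))
  exact .sumCongr ((Equiv.subtypeSubtypeEquivSubtypeInter _ _).trans
      (Equiv.subtypeEquivRight fun _ => and_comm)).symm
    ((Equiv.subtypeSubtypeEquivSubtypeInter _ _).trans
      (Equiv.subtypeEquivRight fun _ => and_comm)).symm

theorem intCast_natCard_subtype_ne {α : Type*} [Finite α] (x : α) :
    (Nat.card {a // a ≠ x} : ℤ) = Nat.card α - 1 := by
  classical
  have := Fintype.ofFinite α
  rw [Nat.card_eq_fintype_card, Fintype.card_subtype_compl, Fintype.card_subtype_eq,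
    Nat.cast_sub (Fintype.card_pos_iff.mpr ⟨x⟩), Nat.card_eq_fintype_card, Nat.cast_one]

theorem not_linearIndependent_pair_iff {K V : Type*} [DivisionRing K] [AddCommGroup V]
    [Module K V] {a b : V} : ¬ LinearIndependent K ![a, b] ↔ b = 0 ∨ ∃ c : K, c • b = a := by
  simp [linearIndependent_fin2, or_iff_not_imp_left]

def prodZeroImpZeroEquivOption (M N : Type*) [Zero M] [Zero N] [DecidableEq M] :
    {x : M × N // x.1 = 0 → x.2 = 0} ≃ Option ({a : M // a ≠ 0} × N) where
  toFun x := if h : x.1.1 = 0 then none else some (⟨x.1.1, h⟩, x.1.2)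
  invFun := Option.elim' ⟨(0, 0), fun _ => rfl⟩ fun y => ⟨(y.1, y.2), fun h => absurd h y.1.2⟩
  left_inv := by
    rintro ⟨⟨a, b⟩, h⟩
    by_cases ha : a = 0
    · obtain rfl : b = 0 := h ha
      simp [ha]
    · simp [ha]
  right_inv := by
    rintro (_ | ⟨⟨a, ha⟩, b⟩) <;> simp_all

section Supp

variable {n : ℕ} {F : Type} [Field F] [DecidableEq F]

theorem supp_subset_supp_iff {a b : Fin n → F} : supp b ⊆ supp a ↔ ∀ i, a i = 0 → b i = 0 := by
  simp [supp, Finset.subset_iff, not_imp_not]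

theorem supp_smul {c : F} (hc : c ≠ 0) (b : Fin n → F) : supp (c • b) = supp b := by
  simp [supp, hc]

theorem not_linearIndependent_and_supp_subset_iff {a b : Fin n → F} :
    ¬ LinearIndependent F ![a, b] ∧ supp b ⊆ supp a ↔ b = 0 ∨ ∃ c : F, c ≠ 0 ∧ c • b = a := by
  rw [not_linearIndependent_pair_iff]
  constructor
  · rintro ⟨rfl | ⟨c, rfl⟩, hsupp⟩
    · exact .inl rfl
    · rcases eq_or_ne c 0 with rfl | hc
      · exact .inl (funext fun i => supp_subset_supp_iff.mp hsupp i (by simp))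
      · exact .inr ⟨c, hc, rfl⟩
  · rintro (rfl | ⟨c, hc, rfl⟩)
    · exact ⟨.inl rfl, supp_subset_supp_iff.mpr fun _ _ => rfl⟩
    · exact ⟨.inr ⟨c, rfl⟩, (supp_smul hc b).ge⟩

def suppSubsetPairsEquiv :
    {p : (Fin n → F) × (Fin n → F) // supp p.2 ⊆ supp p.1} ≃
      (Fin n → {x : F × F // x.1 = 0 → x.2 = 0}) where
  toFun p i := ⟨(p.1.1 i, p.1.2 i), supp_subset_supp_iff.mp p.2 i⟩
  invFun f := ⟨(fun i => (f i).1.1, fun i => (f i).1.2), supp_subset_supp_iff.mpr fun i => (f i).2⟩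

noncomputable def dependentPairsEquiv :
    (Fin n → F) ⊕ ({b : Fin n → F // b ≠ 0} × {c : F // c ≠ 0}) ≃
      {p : (Fin n → F) × (Fin n → F) //
        ¬ LinearIndependent F ![p.1, p.2] ∧ supp p.2 ⊆ supp p.1} :=
  .ofBijective
    (Sum.elim (fun a => ⟨(a, 0), not_linearIndependent_and_supp_subset_iff.mpr (.inl rfl)⟩)
      fun x => ⟨(x.2.1 • x.1.1, x.1.1),
        not_linearIndependent_and_supp_subset_iff.mpr (.inr ⟨x.2, x.2.2, rfl⟩)⟩) <| by
  refine ⟨.sumElim ?_ ?_ ?_, ?_⟩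
  · intro a a' h
    simpa using h
  · rintro ⟨⟨b, hb⟩, c, hc⟩ ⟨⟨b', hb'⟩, c', hc'⟩ h
    simp only [Subtype.mk.injEq, Prod.mk.injEq] at h
    obtain ⟨hsmul, rfl⟩ := h
    obtain rfl : c = c' := smul_left_injective F hb hsmul
    rfl
  · rintro a ⟨⟨b, hb⟩, c⟩ h
    simp only [Subtype.mk.injEq, Prod.mk.injEq] at h
    exact hb h.2.symm
  · rintro ⟨⟨a, b⟩, h⟩
    dsimp only at h
    rcases eq_or_ne b 0 with rfl | hb
    · exact ⟨.inl a, rfl⟩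
    · obtain ⟨c, hc, rfl⟩ := (not_linearIndependent_and_supp_subset_iff.mp h).resolve_left hb
      exact ⟨.inr (⟨b, hb⟩, ⟨c, hc⟩), rfl⟩

variable [Fintype F]

theorem card_suppSubsetPairs :
    (Nat.card {p : (Fin n → F) × (Fin n → F) // supp p.2 ⊆ supp p.1} : ℤ) =
      ((Fintype.card F : ℤ) ^ 2 - Fintype.card F + 1) ^ n := by
  rw [Nat.card_congr suppSubsetPairsEquiv, Nat.card_fun,
    Nat.card_congr (prodZeroImpZeroEquivOption F F), Finite.card_option, Nat.card_prod]
  push_cast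
  rw [intCast_natCard_subtype_ne, Nat.card_eq_fintype_card, Nat.card_fin]
  ring

theorem card_dependentPairs :
    (Nat.card {p : (Fin n → F) × (Fin n → F) //
        ¬ LinearIndependent F ![p.1, p.2] ∧ supp p.2 ⊆ supp p.1} : ℤ) =
      (Fintype.card F : ℤ) ^ n + ((Fintype.card F : ℤ) ^ n - 1) * (Fintype.card F - 1) := by
  rw [← Nat.card_congr dependentPairsEquiv, Nat.card_sum, Nat.card_prod]
  push_cast
  rw [intCast_natCard_subtype_ne, intCast_natCard_subtype_ne, Nat.card_fun]
  simp

end Supp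

/-- The number of ordered pairs `(a, b)` of linearly independent vectors of `F_q^n` with
`supp b ⊆ supp a` is `(q² - q + 1)^n - q^(n+1) + q - 1`; in particular it is at most
`(q² - q + 1)^n`. -/
theorem count_bad_pairs {n : ℕ} {F : Type} [Field F] [Fintype F] [DecidableEq F] :
    (Nat.card {p : (Fin n → F) × (Fin n → F) //
        LinearIndependent F ![p.1, p.2] ∧ supp p.2 ⊆ supp p.1} : ℤ) =
      ((Fintype.card F : ℤ) ^ 2 - Fintype.card F + 1) ^ n -
        (Fintype.card F : ℤ) ^ (n + 1) + Fintype.card F - 1 ∧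
    (Nat.card {p : (Fin n → F) × (Fin n → F) //
        LinearIndependent F ![p.1, p.2] ∧ supp p.2 ⊆ supp p.1} : ℤ) ≤
      ((Fintype.card F : ℤ) ^ 2 - Fintype.card F + 1) ^ n := by
  have hsplit := Nat.card_subtype_and_add_card_subtype_not_and
    (fun p : (Fin n → F) × (Fin n → F) => supp p.2 ⊆ supp p.1)
    (fun p => LinearIndependent F ![p.1, p.2])
  have hle := Nat.le.intro hsplit
  zify at hsplit hle
  rw [card_dependentPairs, card_suppSubsetPairs] at hsplit
  rw [card_suppSubsetPairs] at hle
  exact ⟨by linear_combination hsplit, hle⟩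
end
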